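/- A bipartite ordered process W ∈ L(A_I ⊗ A_O ⊗ B_I) without quantum memory (i.e., W = ρ_SEP^{A_I aux} * D^{aux A_O → B_I} with ρ_SEP separable across A_I|aux) is a direct-cause process, and conversely every direct-cause process arises this way. -/

import Mathlib

/-!
A separable state is a mixture `∑ₖ wₖ ρₖ ⊗ σₖ`, and contracting it with `D` over the auxiliary
system gives `∑ₖ wₖ ρₖ ⊗ (σₖ * D)`. Each `σₖ * D` is again the Choi matrix of a channel: writing
`σₖ = Bᴴ B`, it is a sum of congruences `Kⱼᴴ D Kⱼ` of `D` (positivity), and its partial trace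
over `B_I` is `tr σₖ • 1 = 1`. Conversely, a direct-cause process `∑ₖ wₖ ρₖ ⊗ Dₖ` is obtained by
flagging the index `k` in a classical register, `σₖ = |k⟩⟨k|`, and letting
`D = ∑ₖ |k⟩⟨k| ⊗ Dₖ` read the flag, so that `|k⟩⟨k| * D = Dₖ`.
-/

open Matrix ComplexOrder

open scoped Kronecker

namespace Matrix

variable {α κ : Type*}

/-- The link product `σ * D = tr_α[(σᵀ ⊗ 1) D]`, contracting the auxiliary system `α`. -/
def linkProduct [Fintype α] (σ : Matrix α α ℂ) (D : Matrix (α × κ) (α × κ) ℂ) : Matrix κ κ ℂ :=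
  of fun s t => ∑ x, ∑ y, σ y x * D (y, s) (x, t)

def vecKroneckerOne [DecidableEq κ] (b : α → ℂ) : Matrix (α × κ) κ ℂ :=
  of fun p t => b p.1 * (1 : Matrix κ κ ℂ) p.2 t

variable [Fintype α]

lemma linkProduct_conjTranspose_mul_self [Fintype κ] [DecidableEq κ] {ι : Type*} [Fintype ι]
    (B : Matrix ι α ℂ) (D : Matrix (α × κ) (α × κ) ℂ) :
    linkProduct (Bᴴ * B) D =
      ∑ j, (vecKroneckerOne (κ := κ) (B j))ᴴ * D * vecKroneckerOne (κ := κ) (B j) := by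
  ext s t
  simp only [linkProduct, vecKroneckerOne, mul_apply, conjTranspose_apply, RCLike.star_def,
    Finset.sum_mul, of_apply, one_apply, mul_ite, mul_one, mul_zero, apply_ite (starRingEnd ℂ),
    map_zero, ite_mul, zero_mul, sum_apply, Fintype.sum_prod_type, Finset.sum_ite_eq',
    Finset.mem_univ, if_true]
  conv_rhs => rw [Finset.sum_comm]
  refine Finset.sum_congr rfl fun x _ => ?_
  rw [Finset.sum_comm]
  exact Finset.sum_congr rfl fun y _ => Finset.sum_congr rfl fun i _ => by ring

lemma PosSemidef.linkProduct [Fintype κ] {σ : Matrix α α ℂ} {D : Matrix (α × κ) (α × κ) ℂ}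
    (hσ : σ.PosSemidef) (hD : D.PosSemidef) : (linkProduct σ D).PosSemidef := by
  classical
  open scoped MatrixOrder in
  obtain ⟨B, rfl⟩ := CStarAlgebra.nonneg_iff_eq_star_mul_self.mp hσ.nonneg
  rw [star_eq_conjTranspose, linkProduct_conjTranspose_mul_self]
  exact posSemidef_sum _ fun j _ => hD.conjTranspose_mul_mul_same _

lemma sum_linkProduct_apply {β γ : Type*} [Fintype γ] [DecidableEq α] [DecidableEq β]
    {σ : Matrix α α ℂ} {D : Matrix (α × β × γ) (α × β × γ) ℂ}
    (hD : ∀ x a x' a', ∑ b, D (x, a, b) (x', a', b) = if (x, a) = (x', a') then 1 else 0)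
    (hσ : σ.trace = 1) (a a' : β) :
    ∑ b, linkProduct σ D (a, b) (a', b) = if a = a' then 1 else 0 := by
  calc ∑ b, linkProduct σ D (a, b) (a', b)
      = ∑ x, ∑ y, σ y x * ∑ b, D (y, a, b) (x, a', b) := by
        simp only [linkProduct, of_apply, Finset.mul_sum]
        rw [Finset.sum_comm]
        exact Finset.sum_congr rfl fun x _ => Finset.sum_comm
    _ = if a = a' then σ.trace else 0 := by
        by_cases h : a = a' <;> simp [hD, h, trace, Prod.ext_iff]
    _ = if a = a' then 1 else 0 := by rw [hσ]

lemma linkProduct_separable {ι μ : Type*} [Fintype μ] (w : μ → ℂ) (ρ : μ → Matrix ι ι ℂ)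
    (σ : μ → Matrix α α ℂ) (D : Matrix (α × κ) (α × κ) ℂ) :
    (of fun p q : ι × κ => ∑ x, ∑ y, (∑ k, w k * ρ k p.1 q.1 * σ k y x) * D (y, p.2) (x, q.2))
      = ∑ k, w k • (ρ k ⊗ₖ linkProduct (σ k) D) := by
  ext p q
  simp only [of_apply, sum_apply, smul_apply, kroneckerMap_apply, linkProduct, Finset.sum_mul,
    Finset.mul_sum, smul_eq_mul]
  conv_rhs => rw [Finset.sum_comm]
  refine Finset.sum_congr rfl fun x _ => ?_
  rw [Finset.sum_comm]
  exact Finset.sum_congr rfl fun y _ => Finset.sum_congr rfl fun k _ => by ring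

lemma linkProduct_diagonal_single [DecidableEq α] (k : α) (D : Matrix (α × κ) (α × κ) ℂ) :
    linkProduct (diagonal (Pi.single k 1)) D = of fun s t => D (k, s) (k, t) := by
  ext s t
  simp [linkProduct, diagonal_apply, Pi.single_apply]

lemma sum_diagonal_single_kronecker_apply [DecidableEq α] (Ds : α → Matrix κ κ ℂ)
    (x x' : α) (s t : κ) :
    (∑ k, diagonal (Pi.single k 1) ⊗ₖ Ds k) (x, s) (x', t) = if x = x' then Ds x s t else 0 := by
  by_cases h : x = x' <;> simp [sum_apply, Pi.single_apply, h]

end Matrix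

/-- A bipartite ordered process `W` on `A_I ⊗ A_O ⊗ B_I` is a process without quantum
memory (i.e. `W = ρ_SEP^{A_I aux} * D^{aux A_O → B_I}` with `ρ_SEP` separable across
`A_I|aux`) if and only if `W` is a direct-cause process. -/
theorem stmt_14 (nI nO nB : ℕ)
    (W : Matrix (Fin nI × Fin nO × Fin nB) (Fin nI × Fin nO × Fin nB) ℂ) :
    (∃ (na m : ℕ) (w : Fin m → ℝ)
       (ρs : Fin m → Matrix (Fin nI) (Fin nI) ℂ)
       (σs : Fin m → Matrix (Fin na) (Fin na) ℂ)
       (D : Matrix (Fin na × Fin nO × Fin nB) (Fin na × Fin nO × Fin nB) ℂ),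
       (∀ k, 0 ≤ w k) ∧ (∑ k, w k) = 1 ∧
       (∀ k, (ρs k).PosSemidef) ∧ (∀ k, (ρs k).trace = 1) ∧
       (∀ k, (σs k).PosSemidef) ∧ (∀ k, (σs k).trace = 1) ∧
       D.PosSemidef ∧
       (∀ x a x' a', (∑ b : Fin nB, D (x, a, b) (x', a', b))
          = if (x, a) = (x', a') then 1 else 0) ∧
       W = Matrix.of fun p q : Fin nI × Fin nO × Fin nB =>
         ∑ x : Fin na, ∑ y : Fin na,
           (∑ k, (w k : ℂ) * ρs k p.1 q.1 * σs k y x) *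
             D (y, p.2.1, p.2.2) (x, q.2.1, q.2.2))
    ↔
    (∃ (m : ℕ) (w : Fin m → ℝ) (ρs : Fin m → Matrix (Fin nI) (Fin nI) ℂ)
       (Ds : Fin m → Matrix (Fin nO × Fin nB) (Fin nO × Fin nB) ℂ),
       (∀ k, 0 ≤ w k) ∧ (∑ k, w k) = 1 ∧
       (∀ k, (ρs k).PosSemidef) ∧ (∀ k, (ρs k).trace = 1) ∧
       (∀ k, (Ds k).PosSemidef) ∧
       (∀ k a a', (∑ b : Fin nB, Ds k (a, b) (a', b)) = if a = a' then 1 else 0) ∧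
       W = ∑ k, (w k : ℂ) • Matrix.of fun p q : Fin nI × Fin nO × Fin nB =>
         ρs k p.1 q.1 * Ds k p.2 q.2) := by
  constructor
  · rintro ⟨na, m, w, ρs, σs, D, hw, hw1, hρ, hρ1, hσ, hσ1, hD, hD1, rfl⟩
    exact ⟨m, w, ρs, fun k => linkProduct (σs k) D, hw, hw1, hρ, hρ1,
      fun k => (hσ k).linkProduct hD, fun k => sum_linkProduct_apply hD1 (hσ1 k),
      linkProduct_separable _ ρs σs D⟩
  · rintro ⟨m, w, ρs, Ds, hw, hw1, hρ, hρ1, hDs, hDs1, rfl⟩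
    have hflag (k : Fin m) : (diagonal (Pi.single k (1 : ℂ))).PosSemidef :=
      .diagonal (Pi.single_nonneg.mpr zero_le_one)
    refine ⟨m, m, w, ρs, fun k => diagonal (Pi.single k 1),
      ∑ k, diagonal (Pi.single k 1) ⊗ₖ Ds k, hw, hw1, hρ, hρ1, hflag, fun k => by simp [trace],
      posSemidef_sum _ fun k _ => (hflag k).kronecker (hDs k), ?_, ?_⟩
    · intro x a x' a'
      by_cases h : x = x' <;> simp [sum_diagonal_single_kronecker_apply, h, hDs1]
    · rw [linkProduct_separable]
      simp only [linkProduct_diagonal_single, sum_diagonal_single_kronecker_apply, if_true]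
      rfl
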